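/- arXiv:1701.00863 — 4 statements merged into one kernel-verified Lean document; each statement's English description precedes it below -/
import Mathlib

section
/- For every integer r ≥ 1, the spectrum of the r×r Hermitian matrix Δ_{π/2}^r is exactly the set {2cos(πj/(2r)) : j ∈ ℤ, 0 ≤ j ≤ 2r, j odd}, and every eigenvalue of Δ_{π/2}^r is simple (the matrix has r distinct eigenvalues). -/
/-- The r×r matrix Δ_θ^r: ones on the off-diagonals, with twisted corner entries
e^{-iθ} (top-right) and e^{iθ} (bottom-left).  For r = 1 this gives (2cos θ) and for
r = 2 it gives [[0, 1+e^{-iθ}],[1+e^{iθ}, 0]]. -/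
noncomputable def deltaMatrix (r : ℕ) (θ : ℝ) : Matrix (Fin r) (Fin r) ℂ :=
  Matrix.of fun j k =>
    (if (j : ℤ) - (k : ℤ) = 1 ∨ (k : ℤ) - (j : ℤ) = 1 then 1 else 0)
    + (if (j : ℕ) = 0 ∧ (k : ℕ) = r - 1 then Complex.exp (-(Complex.I * (θ : ℂ))) else 0)
    + (if (j : ℕ) = r - 1 ∧ (k : ℕ) = 0 then Complex.exp (Complex.I * (θ : ℂ)) else 0)

/-- The multiplicity of μ as an eigenvalue of M: the dimension of the eigenspace. -/
noncomputable def eigMult {n : Type*} [Fintype n] [DecidableEq n]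
    (M : Matrix n n ℂ) (μ : ℂ) : ℕ :=
  Module.finrank ℂ ↥(Module.End.eigenspace (Matrix.toLin' M) μ)

/-!
For `ω ^ r = exp (I θ)` the geometric vector `(ω ^ k)ₖ` is an eigenvector of `Δ_θ^r` with
eigenvalue `ω + ω⁻¹`: the twisted corner entries are exactly what the wrap-around of the shift
needs. For `θ = π/2` and odd `j ≤ 2r`, `ω = exp (± I π j / (2r))` is such a root, so the `r`
numbers `2 cos (π j / (2r))` are eigenvalues; they are distinct since the angles lie in `[0, π]`.
An endomorphism of an `r`-dimensional space with `r` distinct eigenvalues has no others, and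
all its eigenspaces are lines.
-/

namespace Module.End

variable {K V ι : Type*} [Field K] [AddCommGroup V] [Module K V] [FiniteDimensional K V]
  [Fintype ι] {f : End K V} {μ : ι → K} {v : ι → V}

theorem hasEigenvalue_iff_mem_range_of_card_eq_finrank (hμ : μ.Injective)
    (hv : ∀ i, f.HasEigenvector (μ i) (v i)) (hcard : Fintype.card ι = finrank K V) {ν : K} :
    f.HasEigenvalue ν ↔ ν ∈ Set.range μ := by
  refine ⟨fun hν => ?_, fun ⟨i, hi⟩ => hi ▸ hasEigenvalue_of_hasEigenvector (hv i)⟩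
  by_contra hνμ
  obtain ⟨w, hw⟩ := hν.exists_hasEigenvector
  -- adjoining `w` to the family `v` would give `finrank K V + 1` independent eigenvectors
  have hinj : (fun o : Option ι => o.elim ν μ).Injective := by
    rintro (_ | i) (_ | j) h
    exacts [rfl, (hνμ ⟨j, h.symm⟩).elim, (hνμ ⟨i, h⟩).elim, congrArg some (hμ h)]
  have hli := f.eigenvectors_linearIndependent' _ hinj (fun o => o.elim w v)
    (by rintro (_ | i); exacts [hw, hv i])
  have := hli.fintype_card_le_finrank
  rw [Fintype.card_option, hcard] at this
  omega

theorem finrank_eigenspace_eq_one_of_card_eq_finrank (hμ : μ.Injective)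
    (hv : ∀ i, f.HasEigenvector (μ i) (v i)) (hcard : Fintype.card ι = finrank K V) (i : ι) :
    finrank K (f.eigenspace (μ i)) = 1 := by
  classical
  set others := Submodule.span K (Set.range (v ∘ ((↑) : {j // j ≠ i} → ι)))
  have hothers : finrank K others = finrank K V - 1 := by
    rw [finrank_span_eq_card ((f.eigenvectors_linearIndependent' μ hμ v hv).comp _
      Subtype.val_injective), Fintype.card_subtype_compl, Fintype.card_subtype_eq, hcard]
  have hdisj : Disjoint (f.eigenspace (μ i)) others := by
    refine (f.eigenspaces_iSupIndep (μ i)).mono_right (Submodule.span_le.mpr ?_)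
    rintro _ ⟨j, rfl⟩
    exact Submodule.mem_iSup_of_mem (μ j) (Submodule.mem_iSup_of_mem (hμ.ne j.2) (hv j).1)
  have hpos : 0 < finrank K (f.eigenspace (μ i)) :=
    Module.finrank_pos_iff_exists_ne_zero.mpr ⟨⟨v i, (hv i).1⟩, by simpa using (hv i).2⟩
  have := Submodule.finrank_add_finrank_le_of_disjoint hdisj
  omega

end Module.End

open Complex Matrix
open scoped Real

-- uniform in `r`: for `r ≤ 2` corner and neighbour entries add up
theorem deltaMatrix_mulVec_apply (r : ℕ) (θ : ℝ) (x : ℕ → ℂ) (j : Fin r) :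
    (deltaMatrix r θ *ᵥ fun k => x k) j =
      (if (j : ℕ) = 0 then exp (-(I * θ)) * x (r - 1) else x (j - 1)) +
        (if (j : ℕ) = r - 1 then exp (I * θ) * x 0 else x (j + 1)) := by
  obtain ⟨j, hj⟩ := j
  set g : ℕ → ℂ := fun k =>
    (if 0 < j then (if k = j - 1 then x k else 0) else 0) + (if k = j + 1 then x k else 0)
      + (if j = 0 then (if k = r - 1 then exp (-(I * θ)) * x k else 0) else 0)
      + (if j = r - 1 then (if k = 0 then exp (I * θ) * x k else 0) else 0) with hg
  have hentry : ∀ k : Fin r, deltaMatrix r θ ⟨j, hj⟩ k * x k = g k := by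
    intro k
    simp only [deltaMatrix, of_apply, hg]
    split_ifs <;> first | omega | ring
  simp only [mulVec, dotProduct, hentry]
  rw [Fin.sum_univ_eq_sum_range g r]
  simp only [hg, Finset.sum_add_distrib, Finset.sum_ite_irrel, Finset.sum_ite_eq',
    Finset.mem_range, Finset.sum_const_zero]
  split_ifs <;> first | omega | ring

theorem deltaMatrix_mulVec_pow {r : ℕ} {θ : ℝ} {ω : ℂ} (hω : ω ^ r = exp (I * θ)) :
    deltaMatrix r θ *ᵥ (fun k : Fin r => ω ^ (k : ℕ)) =
      (ω + ω⁻¹) • fun k : Fin r => ω ^ (k : ℕ) := by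
  ext ⟨j, hj⟩
  have hω0 : ω ≠ 0 := by
    rintro rfl
    exact exp_ne_zero _ (hω ▸ zero_pow (by omega))
  have hprev : (if j = 0 then exp (-(I * θ)) * ω ^ (r - 1) else ω ^ (j - 1)) = ω⁻¹ * ω ^ j := by
    split_ifs with h
    · obtain ⟨n, rfl⟩ : ∃ n, r = n + 1 := ⟨r - 1, by omega⟩
      rw [exp_neg, ← hω, h, pow_succ, Nat.add_sub_cancel, pow_zero]
      field_simp
    · obtain ⟨m, rfl⟩ : ∃ m, j = m + 1 := ⟨j - 1, by omega⟩
      rw [Nat.add_sub_cancel, pow_succ']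
      field_simp
  have hnext : (if j = r - 1 then exp (I * θ) * ω ^ 0 else ω ^ (j + 1)) = ω * ω ^ j := by
    split_ifs with h
    · rw [← hω, pow_zero, mul_one, h, ← pow_succ', Nat.sub_add_cancel (by omega)]
    · exact pow_succ' ω j
  rw [deltaMatrix_mulVec_apply r θ (ω ^ ·), hprev, hnext, Pi.smul_apply, smul_eq_mul]
  ring

theorem hasEigenvector_deltaMatrix {r : ℕ} {θ : ℝ} {ω : ℂ} (hr : 0 < r)
    (hω : ω ^ r = exp (I * θ)) :
    Module.End.HasEigenvector (toLin' (deltaMatrix r θ)) (ω + ω⁻¹) fun k : Fin r => ω ^ (k : ℕ) :=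
  ⟨by rw [Module.End.mem_eigenspace_iff, toLin'_apply, deltaMatrix_mulVec_pow hω],
    fun h => by simpa using congrFun h ⟨0, hr⟩⟩

theorem exp_I_mul_add_inv (x : ℝ) : exp (I * x) + (exp (I * x))⁻¹ = (2 * Real.cos x : ℝ) := by
  rw [← exp_neg, ofReal_mul, ofReal_ofNat, ofReal_cos, two_cos, mul_comm I, neg_mul]

theorem exists_pow_eq_exp_pi_div_two_of_odd {r j : ℕ} (hr : r ≠ 0) (hj : Odd j) :
    ∃ ω : ℂ, ω ^ r = exp (I * (π / 2 : ℝ)) ∧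
      ω + ω⁻¹ = (2 * Real.cos (π * j / (2 * r)) : ℝ) := by
  have hr' : (r : ℝ) ≠ 0 := by exact_mod_cast hr
  suffices h : ∃ (x : ℝ) (n : ℤ), r * x = π / 2 + 2 * π * n ∧
      Real.cos x = Real.cos (π * j / (2 * r)) by
    obtain ⟨x, n, hx, hcos⟩ := h
    refine ⟨exp (I * x), ?_, by rw [exp_I_mul_add_inv, hcos]⟩
    rw [← exp_nat_mul, exp_eq_exp_iff_exists_int]
    refine ⟨n, ?_⟩
    rw [← mul_assoc, mul_comm _ I, mul_assoc, ← ofReal_natCast, ← ofReal_mul, hx]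
    push_cast
    ring
  -- `j ≡ 1 (mod 4)` needs the angle `πj/(2r)`, `j ≡ 3 (mod 4)` its negative
  obtain ⟨m, rfl | rfl⟩ : ∃ m, j = 4 * m + 1 ∨ j = 4 * m + 3 := ⟨j / 4, by grind⟩
  · exact ⟨_, m, by field_simp; push_cast; ring, rfl⟩
  · exact ⟨_, -(m + 1), by field_simp; push_cast; ring, Real.cos_neg _⟩

theorem cos_pi_mul_odd_div_injective (r : ℕ) :
    (fun i : Fin r => Real.cos (π * (2 * i + 1 : ℕ) / (2 * r))).Injective := by
  intro a b h
  have hr : (0 : ℝ) < r := by exact_mod_cast a.pos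
  have hmem : ∀ i : Fin r, π * (2 * i + 1 : ℕ) / (2 * r) ∈ Set.Icc 0 π := by
    intro i
    have hi : ((2 * i + 1 : ℕ) : ℝ) ≤ 2 * r := by exact_mod_cast (by omega : 2 * i + 1 ≤ 2 * r)
    refine ⟨by positivity, ?_⟩
    rw [div_le_iff₀ (by positivity)]
    nlinarith [Real.pi_pos]
  have := Real.injOn_cos (hmem a) (hmem b) h
  field_simp at this
  have : 2 * (a : ℕ) + 1 = 2 * b + 1 := by exact_mod_cast this
  exact Fin.ext (by omega)

/-- the spectrum of Δ_{π/2}^r is {2cos(πj/(2r)) : 0 ≤ j ≤ 2r, j odd},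
every eigenvalue is simple, and there are r distinct eigenvalues. -/
theorem spectrum_deltaMatrix_pi_div_two (r : ℕ) (hr : 1 ≤ r) :
    spectrum ℂ (deltaMatrix r (Real.pi / 2)) =
      {x : ℂ | ∃ j : ℕ, j ≤ 2 * r ∧ Odd j ∧
        x = (2 * Real.cos (Real.pi * j / (2 * r)) : ℝ)} ∧
    (∀ μ ∈ spectrum ℂ (deltaMatrix r (Real.pi / 2)),
      eigMult (deltaMatrix r (Real.pi / 2)) μ = 1) ∧
    (spectrum ℂ (deltaMatrix r (Real.pi / 2))).ncard = r := by
  choose ω hω hωμ using fun i : Fin r =>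
    exists_pow_eq_exp_pi_div_two_of_odd (r := r) (by omega) (odd_two_mul_add_one (i : ℕ))
  have hv := fun i => hasEigenvector_deltaMatrix hr (hω i)
  have hμ : (fun i => ω i + (ω i)⁻¹).Injective := fun a b h => by
    simp only [hωμ] at h
    exact cos_pi_mul_odd_div_injective r (mul_left_cancel₀ two_ne_zero (ofReal_injective h))
  have hcard : Fintype.card (Fin r) = Module.finrank ℂ (Fin r → ℂ) := by
    rw [Fintype.card_fin, Module.finrank_fin_fun]
  have hspec : spectrum ℂ (deltaMatrix r (π / 2)) = Set.range fun i => ω i + (ω i)⁻¹ := by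
    ext ν
    rw [← spectrum_toLin', ← Module.End.hasEigenvalue_iff_mem_spectrum,
      Module.End.hasEigenvalue_iff_mem_range_of_card_eq_finrank hμ hv hcard]
  refine ⟨hspec.trans ?_, ?_, ?_⟩
  · ext x
    constructor
    · rintro ⟨i, rfl⟩
      exact ⟨2 * i + 1, by omega, odd_two_mul_add_one _, hωμ i⟩
    · rintro ⟨j, hj, ⟨i, rfl⟩, rfl⟩
      exact ⟨⟨i, by omega⟩, hωμ _⟩
  · rw [hspec]
    rintro _ ⟨i, rfl⟩
    exact Module.End.finrank_eigenspace_eq_one_of_card_eq_finrank hμ hv hcard i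
  · rw [hspec, Set.ncard_range_of_injective hμ, Nat.card_fin]
end

section
/- Fix an integer r ≥ 1 and for θ ∈ [0,π] let λ_1(θ) ≤ ⋯ ≤ λ_r(θ) denote the eigenvalues of the r×r Hermitian matrix Δ_θ^r in nondecreasing order, counted with multiplicity. Then for every 1 ≤ j ≤ r, the function θ ↦ λ_j(θ) is differentiable at every θ ∈ (0,π), and its derivative satisfies (−1)^{r−j} λ_j′(θ) < 0 for all θ ∈ (0,π); in particular λ_j is strictly decreasing on (0,π) if r−j is even and strictly increasing on (0,π) if r−j is odd. -/
/-! ### Auxiliary lemmas -/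

lemma DM.entry_eq (r : ℕ) (hr : 1 ≤ r) (θ : ℝ) (ζ : ℂ)
    (hζr : ζ ^ r = Complex.exp (Complex.I * θ)) (nn kk : ℕ) (hn : nn < r) (hk : kk < r) :
    ((if (nn : ℤ) - (kk : ℤ) = 1 ∨ (kk : ℤ) - (nn : ℤ) = 1 then (1:ℂ) else 0)
      + (if nn = 0 ∧ kk = r - 1 then Complex.exp (-(Complex.I * θ)) else 0)
      + (if nn = r - 1 ∧ kk = 0 then Complex.exp (Complex.I * θ) else 0)) * ζ ^ (kk + 1)
    = (if kk = (if nn = 0 then r - 1 else nn - 1) then ζ ^ nn else 0)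
      + (if kk = (if nn = r - 1 then 0 else nn + 1) then ζ ^ (nn + 2) else 0) := by
  have hinv : Complex.exp (-(Complex.I * θ)) * ζ ^ r = 1 := by
    rw [hζr, ← Complex.exp_add]; simp
  rcases Nat.lt_or_ge 1 r with hr2 | hr1
  swap
  · -- r = 1
    have hr1 : r = 1 := by omega
    subst hr1
    have h0 : nn = 0 := by omega
    have h1 : kk = 0 := by omega
    subst h0; subst h1
    norm_num
    linear_combination hinv - ζ * hζr
  · by_cases h0 : nn = 0
    · subst h0
      rw [show (if (0:ℕ) = 0 then r - 1 else 0 - 1) = r - 1 from if_pos rfl,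
        show (if (0:ℕ) = r - 1 then 0 else 0 + 1) = 1 from if_neg (by omega)]
      by_cases hk1 : kk = 1 <;> by_cases hkr : kk = r - 1
      · -- kk = 1 = r-1, r = 2
        have : r = 2 := by omega
        subst this; subst hk1
        norm_num
        linear_combination hinv
      · subst hk1
        rw [if_pos (by omega : ((0:ℕ):ℤ) - ((1:ℕ):ℤ) = 1 ∨ ((1:ℕ):ℤ) - ((0:ℕ):ℤ) = 1),
          if_neg (by omega : ¬((0:ℕ) = 0 ∧ 1 = r - 1)),
          if_neg (by omega : ¬((0:ℕ) = r - 1 ∧ 1 = 0)),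
          if_neg (by omega : ¬(1 = r - 1)), if_pos rfl]
        ring
      · subst hkr
        rw [if_neg (by omega : ¬(((0:ℕ):ℤ) - ((r-1:ℕ):ℤ) = 1 ∨ ((r-1:ℕ):ℤ) - ((0:ℕ):ℤ) = 1)),
          if_pos (by omega : (0:ℕ) = 0 ∧ r - 1 = r - 1),
          if_neg (by omega : ¬((0:ℕ) = r - 1 ∧ r - 1 = 0)),
          if_pos rfl, if_neg (by omega : ¬(r - 1 = 1))]
        have h : r - 1 + 1 = r := by omega
        rw [h]
        simpa using hinv
      · rw [if_neg (by omega : ¬(((0:ℕ):ℤ) - (kk:ℤ) = 1 ∨ (kk:ℤ) - ((0:ℕ):ℤ) = 1)),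
          if_neg (by omega : ¬((0:ℕ) = 0 ∧ kk = r - 1)),
          if_neg (by omega : ¬((0:ℕ) = r - 1 ∧ kk = 0)),
          if_neg (by omega : ¬(kk = r - 1)), if_neg (by omega : ¬(kk = 1))]
        ring
    · by_cases hR : nn = r - 1
      · rw [show (if nn = 0 then r - 1 else nn - 1) = nn - 1 from if_neg h0,
          show (if nn = r - 1 then 0 else nn + 1) = 0 from if_pos hR]
        by_cases hk0 : kk = 0 <;> by_cases hkp : kk = nn - 1
        · -- kk = 0 = nn-1, nn = 1, r = 2
          have hrr : r = 2 := by omega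
          have hnn : nn = 1 := by omega
          subst hnn; subst hk0; subst hrr
          norm_num
          linear_combination -ζ * hζr
        · subst hk0
          rw [if_neg (by omega : ¬((nn:ℤ) - ((0:ℕ):ℤ) = 1 ∨ ((0:ℕ):ℤ) - (nn:ℤ) = 1)),
            if_neg (by omega : ¬(nn = 0 ∧ (0:ℕ) = r - 1)),
            if_pos (by omega : nn = r - 1 ∧ (0:ℕ) = 0),
            if_neg (by omega : ¬((0:ℕ) = nn - 1)), if_pos rfl]
          have h : nn + 2 = r + 1 := by omega
          rw [h]
          conv_rhs => rw [pow_succ, hζr]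
          ring
        · subst hkp
          rw [if_pos (by omega : (nn:ℤ) - ((nn-1:ℕ):ℤ) = 1 ∨ ((nn-1:ℕ):ℤ) - (nn:ℤ) = 1),
            if_neg (by omega : ¬(nn = 0 ∧ nn - 1 = r - 1)),
            if_neg (by omega : ¬(nn = r - 1 ∧ nn - 1 = 0)),
            if_pos rfl, if_neg (by omega : ¬(nn - 1 = 0))]
          have h : nn - 1 + 1 = nn := by omega
          rw [h]; ring
        · rw [if_neg (by omega : ¬((nn:ℤ) - (kk:ℤ) = 1 ∨ (kk:ℤ) - (nn:ℤ) = 1)),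
            if_neg (by omega : ¬(nn = 0 ∧ kk = r - 1)),
            if_neg (by omega : ¬(nn = r - 1 ∧ kk = 0)),
            if_neg (by omega : ¬(kk = nn - 1)), if_neg (by omega : ¬(kk = 0))]
          ring
      · rw [show (if nn = 0 then r - 1 else nn - 1) = nn - 1 from if_neg h0,
          show (if nn = r - 1 then 0 else nn + 1) = nn + 1 from if_neg hR]
        by_cases hkp : kk = nn - 1 <;> by_cases hkq : kk = nn + 1
        · omega
        · subst hkp
          rw [if_pos (by omega : (nn:ℤ) - ((nn-1:ℕ):ℤ) = 1 ∨ ((nn-1:ℕ):ℤ) - (nn:ℤ) = 1),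
            if_neg (by omega : ¬(nn = 0 ∧ nn - 1 = r - 1)),
            if_neg (by omega : ¬(nn = r - 1 ∧ nn - 1 = 0)),
            if_pos rfl, if_neg (by omega : ¬(nn - 1 = nn + 1))]
          have h : nn - 1 + 1 = nn := by omega
          rw [h]; ring
        · subst hkq
          rw [if_pos (by omega : (nn:ℤ) - ((nn+1:ℕ):ℤ) = 1 ∨ ((nn+1:ℕ):ℤ) - (nn:ℤ) = 1),
            if_neg (by omega : ¬(nn = 0 ∧ nn + 1 = r - 1)),
            if_neg (by omega : ¬(nn = r - 1 ∧ nn + 1 = 0)),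
            if_neg (by omega : ¬(nn + 1 = nn - 1)), if_pos rfl]
          ring
        · rw [if_neg (by omega : ¬((nn:ℤ) - (kk:ℤ) = 1 ∨ (kk:ℤ) - (nn:ℤ) = 1)),
            if_neg (by omega : ¬(nn = 0 ∧ kk = r - 1)),
            if_neg (by omega : ¬(nn = r - 1 ∧ kk = 0)),
            if_neg (by omega : ¬(kk = nn - 1)), if_neg (by omega : ¬(kk = nn + 1))]
          ring

open Polynomial in
lemma DM.charpoly_eval {r : ℕ} (M : Matrix (Fin r) (Fin r) ℂ) (μ : ℂ) :
    (M.charpoly).eval μ = (μ • (1 : Matrix (Fin r) (Fin r) ℂ) - M).det := by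
  rw [Matrix.charpoly, ← Polynomial.coe_evalRingHom, RingHom.map_det]
  congr 1
  ext i j
  by_cases h : i = j
  · subst h; simp [Matrix.charmatrix_apply_eq, Matrix.one_apply]
  · simp [Matrix.charmatrix_apply_ne _ _ _ h, Matrix.one_apply, h]

open Polynomial in
lemma DM.deltaMatrix_root (r : ℕ) (hr : 1 ≤ r) (θ x : ℝ) (c : ℤ)
    (hx : (r : ℝ) * x = θ + 2 * Real.pi * c) :
    Polynomial.eval ((2 * Real.cos x : ℝ) : ℂ) (deltaMatrix r θ).charpoly = 0 := by
  set ζ : ℂ := Complex.exp (Complex.I * x) with hζ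
  have hx' : ((r : ℕ) : ℂ) * (x : ℂ) = (θ : ℂ) + 2 * (Real.pi : ℂ) * (c : ℂ) := by
    exact_mod_cast congrArg Complex.ofReal hx
  have hζne : ζ ≠ 0 := Complex.exp_ne_zero _
  have hζr : ζ ^ r = Complex.exp (Complex.I * θ) := by
    rw [hζ, ← Complex.exp_nat_mul]
    have h2 : (r : ℂ) * (Complex.I * x) = Complex.I * θ + c * (2 * Real.pi * Complex.I) := by
      linear_combination Complex.I * hx'
    rw [h2, Complex.exp_add, Complex.exp_int_mul_two_pi_mul_I, mul_one]
  set μ : ℂ := ((2 * Real.cos x : ℝ) : ℂ) with hμdef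
  have hμ : μ = ζ + ζ⁻¹ := by
    rw [hμdef, hζ, ← Complex.exp_neg]
    push_cast
    rw [mul_comm Complex.I (x:ℂ), Complex.two_cos]
    ring_nf
  rw [DM.charpoly_eval]
  rw [← Matrix.exists_mulVec_eq_zero_iff]
  refine ⟨fun n => ζ ^ ((n : ℕ) + 1), ?_, ?_⟩
  · intro h
    have h0 := congrFun h ⟨0, by omega⟩
    simp only [Pi.zero_apply] at h0
    exact pow_ne_zero _ hζne h0
  · funext n
    have key : ∀ k : Fin r, (deltaMatrix r θ) n k * ζ ^ ((k : ℕ) + 1)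
        = (if k = (⟨if (n:ℕ) = 0 then r - 1 else (n:ℕ) - 1,
              by have := n.isLt; split <;> omega⟩ : Fin r)
            then ζ ^ (n:ℕ) else 0)
          + (if k = (⟨if (n:ℕ) = r - 1 then 0 else (n:ℕ) + 1,
              by have := n.isLt; split <;> omega⟩ : Fin r)
            then ζ ^ ((n:ℕ) + 2) else 0) := by
      intro k
      have h := DM.entry_eq r hr θ ζ hζr (n : ℕ) (k : ℕ) n.isLt k.isLt
      simp only [deltaMatrix, Matrix.of_apply]
      rw [h]
      congr 1
      · congr 1
        simp [Fin.ext_iff]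
      · congr 1
        simp [Fin.ext_iff]
    have hsum : (deltaMatrix r θ).mulVec (fun n => ζ ^ ((n : ℕ) + 1)) n
        = ζ ^ (n : ℕ) + ζ ^ ((n : ℕ) + 2) := by
      unfold Matrix.mulVec dotProduct
      rw [Finset.sum_congr rfl (fun k _ => key k), Finset.sum_add_distrib]
      rw [Finset.sum_ite_eq' Finset.univ, Finset.sum_ite_eq' Finset.univ]
      simp
    simp only [Matrix.sub_mulVec, Pi.sub_apply, Matrix.smul_mulVec, Matrix.one_mulVec,
      Pi.smul_apply, smul_eq_mul, hsum, Pi.zero_apply]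
    rw [hμ]
    field_simp
    ring

/-- integer offset for the `t`-th angle from the top -/
def DM.c (t : ℕ) : ℤ := if Even t then ((t / 2 : ℕ) : ℤ) else -(((t / 2 : ℕ) : ℤ) + 1)

/-- raw angle -/
noncomputable def DM.ang (r t : ℕ) (θ : ℝ) : ℝ := (θ + 2 * Real.pi * (DM.c t)) / r

/-- folded angle numerator -/
noncomputable def DM.psiNum (t : ℕ) (θ : ℝ) : ℝ :=
  2 * (((t + 1) / 2 : ℕ) : ℝ) * Real.pi + (if Even t then θ else -θ)

/-- folded angle, lies in `(0, π)` -/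
noncomputable def DM.psiF (r t : ℕ) (θ : ℝ) : ℝ := DM.psiNum t θ / r

namespace DM

lemma ang_eq (r t : ℕ) (θ : ℝ) :
    ang r t θ = if Even t then psiF r t θ else -psiF r t θ := by
  rcases Nat.even_or_odd t with he | ho
  · obtain ⟨s, hs⟩ := he
    rw [if_pos ⟨s, hs⟩]
    unfold ang psiF psiNum c
    rw [if_pos ⟨s, hs⟩, if_pos ⟨s, hs⟩]
    have h1 : (t + 1) / 2 = t / 2 := by omega
    rw [h1, Int.cast_natCast]
    ring
  · have hne : ¬ Even t := Nat.not_even_iff_odd.mpr ho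
    rw [if_neg hne]
    unfold ang psiF psiNum c
    rw [if_neg hne, if_neg hne]
    have h1 : (t + 1) / 2 = t / 2 + 1 := by
      obtain ⟨s, hs⟩ := ho; omega
    rw [h1, Int.cast_neg, Int.cast_add, Int.cast_one, Int.cast_natCast]
    push_cast
    ring

lemma cos_ang (r t : ℕ) (θ : ℝ) : Real.cos (ang r t θ) = Real.cos (psiF r t θ) := by
  rw [ang_eq]; split
  · rfl
  · exact Real.cos_neg _

variable {r t : ℕ} {θ : ℝ}

lemma psiNum_pos (hθ : 0 < θ) (hθπ : θ < Real.pi) : 0 < psiNum t θ := by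
  unfold psiNum
  rcases Nat.even_or_odd t with he | ho
  · rw [if_pos he]
    have : (0:ℝ) ≤ 2 * (((t + 1) / 2 : ℕ) : ℝ) * Real.pi := by positivity
    linarith
  · rw [if_neg (Nat.not_even_iff_odd.mpr ho)]
    have h1 : (1 : ℕ) ≤ (t + 1) / 2 := by obtain ⟨s, hs⟩ := ho; omega
    have h1' : (1 : ℝ) ≤ (((t + 1) / 2 : ℕ) : ℝ) := by exact_mod_cast h1
    nlinarith [Real.pi_pos]

lemma psiNum_lt_pi (ht : t < r) (hθ : 0 < θ) (hθπ : θ < Real.pi) :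
    psiNum t θ < r * Real.pi := by
  unfold psiNum
  have htr : ((t : ℝ) + 1) ≤ (r : ℝ) := by exact_mod_cast ht
  rcases Nat.even_or_odd t with he | ho
  · rw [if_pos he]
    have h2 : 2 * ((t + 1) / 2 : ℕ) = t := by obtain ⟨s, hs⟩ := he; omega
    have h2' : 2 * (((t + 1) / 2 : ℕ) : ℝ) = (t : ℝ) := by exact_mod_cast h2
    nlinarith [Real.pi_pos]
  · rw [if_neg (Nat.not_even_iff_odd.mpr ho)]
    have h2 : 2 * ((t + 1) / 2 : ℕ) = t + 1 := by obtain ⟨s, hs⟩ := ho; omega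
    have h2' : 2 * (((t + 1) / 2 : ℕ) : ℝ) = (t : ℝ) + 1 := by exact_mod_cast h2
    nlinarith [Real.pi_pos]

lemma psiNum_strict (hθ : 0 < θ) (hθπ : θ < Real.pi) : psiNum t θ < psiNum (t + 1) θ := by
  unfold psiNum
  rcases Nat.even_or_odd t with he | ho
  · rw [if_pos he, if_neg (by rw [Nat.even_add_one]; exact not_not_intro he)]
    have h2 : 2 * ((t + 1) / 2 : ℕ) = t := by obtain ⟨s, hs⟩ := he; omega
    have h3 : 2 * ((t + 1 + 1) / 2 : ℕ) = t + 2 := by obtain ⟨s, hs⟩ := he; omega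
    have h2' : 2 * (((t + 1) / 2 : ℕ) : ℝ) = (t : ℝ) := by exact_mod_cast h2
    have h3' : 2 * (((t + 1 + 1) / 2 : ℕ) : ℝ) = (t : ℝ) + 2 := by exact_mod_cast h3
    nlinarith [Real.pi_pos]
  · have hne : ¬ Even t := Nat.not_even_iff_odd.mpr ho
    rw [if_neg hne, if_pos (Nat.even_add_one.mpr hne)]
    have hcc : ((t + 1 + 1) / 2 : ℕ) = ((t + 1) / 2 : ℕ) := by
      obtain ⟨s, hs⟩ := ho; omega
    rw [hcc]
    linarith

lemma psiF_pos (hr : 0 < r) (hθ : 0 < θ) (hθπ : θ < Real.pi) : 0 < psiF r t θ :=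
  div_pos (psiNum_pos hθ hθπ) (by exact_mod_cast hr)

lemma psiF_lt_pi (ht : t < r) (hθ : 0 < θ) (hθπ : θ < Real.pi) : psiF r t θ < Real.pi := by
  rw [psiF, div_lt_iff₀ (by exact_mod_cast Nat.zero_lt_of_lt ht : (0:ℝ) < r)]
  rw [mul_comm]
  exact psiNum_lt_pi ht hθ hθπ

lemma psiF_strict (hr : 0 < r) (hθ : 0 < θ) (hθπ : θ < Real.pi) :
    psiF r t θ < psiF r (t + 1) θ :=
  (div_lt_div_iff_of_pos_right (by exact_mod_cast hr : (0:ℝ) < r)).mpr (psiNum_strict hθ hθπ)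

lemma psiF_mono (hr : 0 < r) (hθ : 0 < θ) (hθπ : θ < Real.pi) {t' : ℕ} (h : t' < t) :
    psiF r t' θ < psiF r t θ := by
  induction t with
  | zero => omega
  | succ n ih =>
    rcases Nat.lt_or_ge t' n with h' | h'
    · exact (ih h').trans (psiF_strict hr hθ hθπ)
    · have : t' = n := by omega
      subst this
      exact psiF_strict hr hθ hθπ

lemma exists_le_ge (σ : Fin r → Fin r) (hσ : Function.Injective σ) (j : Fin r) :
    ∃ i, i ≤ j ∧ j ≤ σ i := by
  by_contra hc
  push_neg at hc
  have hmap : ∀ i ∈ Finset.Iic j, σ i ∈ Finset.Iio j :=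
    fun i hi => Finset.mem_Iio.mpr (hc i (Finset.mem_Iic.mp hi))
  have hcard := Finset.card_le_card_of_injOn σ hmap hσ.injOn
  rw [Fin.card_Iic, Fin.card_Iio] at hcard
  omega

lemma exists_ge_le (σ : Fin r → Fin r) (hσ : Function.Injective σ) (j : Fin r) :
    ∃ i, j ≤ i ∧ σ i ≤ j := by
  by_contra hc
  push_neg at hc
  have hmap : ∀ i ∈ Finset.Ici j, σ i ∈ Finset.Ioi j :=
    fun i hi => Finset.mem_Ioi.mpr (hc i (Finset.mem_Ici.mp hi))
  have hcard := Finset.card_le_card_of_injOn σ hmap hσ.injOn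
  rw [Fin.card_Ici, Fin.card_Ioi] at hcard
  have := j.isLt
  omega

lemma sorted_match (f g : Fin r → ℝ) (hf : Monotone f) (hg : StrictMono g)
    (σ : Fin r → Fin r) (hσ : Function.Injective σ) (h : ∀ j, f (σ j) = g j) :
    ∀ j, f j = g j := by
  intro j
  apply le_antisymm
  · obtain ⟨i, hij, hσi⟩ := exists_le_ge σ hσ j
    calc f j ≤ f (σ i) := hf hσi
      _ = g i := h i
      _ ≤ g j := hg.monotone hij
  · obtain ⟨i, hij, hσi⟩ := exists_ge_le σ hσ j
    calc g j ≤ g i := hg.monotone hij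
      _ = f (σ i) := (h i).symm
      _ ≤ f j := hf hσi

end DM

/-- the `j`-th eigenvalue of `deltaMatrix r θ` (in increasing order) -/
noncomputable def DM.g (r : ℕ) (j : Fin r) (θ : ℝ) : ℝ :=
  2 * Real.cos (DM.ang r (r - 1 - (j : ℕ)) θ)

namespace DM

lemma g_eq_psi (r : ℕ) (j : Fin r) (θ : ℝ) :
    g r j θ = 2 * Real.cos (psiF r (r - 1 - (j : ℕ)) θ) := by
  rw [g, cos_ang]

lemma g_strictMono {r : ℕ} (hr : 1 ≤ r) {θ : ℝ} (hθ : 0 < θ) (hθπ : θ < Real.pi) :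
    StrictMono (fun j : Fin r => g r j θ) := by
  intro j j' hjj
  have hj := j.isLt
  have hj' := j'.isLt
  have hvv : (j : ℕ) < (j' : ℕ) := hjj
  have htt : r - 1 - (j' : ℕ) < r - 1 - (j : ℕ) := by omega
  have htr : r - 1 - (j : ℕ) < r := by omega
  have hpsi := psiF_mono (t := r - 1 - (j : ℕ)) hr hθ hθπ htt
  have h1 : 0 ≤ psiF r (r - 1 - (j' : ℕ)) θ := (psiF_pos hr hθ hθπ).le
  have h2 : psiF r (r - 1 - (j : ℕ)) θ ≤ Real.pi := (psiF_lt_pi htr hθ hθπ).le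
  have := Real.cos_lt_cos_of_nonneg_of_le_pi h1 h2 hpsi
  simp only [g_eq_psi]
  linarith

open Polynomial in
lemma lam_eq_g (r : ℕ) (hr : 1 ≤ r) (lam : Fin r → ℝ → ℝ)
    (hsorted : ∀ θ : ℝ, Monotone fun j => lam j θ)
    (hcp : ∀ θ : ℝ, (deltaMatrix r θ).charpoly =
      ∏ j : Fin r, (X - C ((lam j θ : ℝ) : ℂ)))
    {θ : ℝ} (hθ : 0 < θ) (hθπ : θ < Real.pi) :
    ∀ j : Fin r, lam j θ = g r j θ := by
  have hex : ∀ j : Fin r, ∃ i : Fin r, lam i θ = g r j θ := by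
    intro j
    set t := r - 1 - (j : ℕ)
    have hroot : Polynomial.eval ((g r j θ : ℝ) : ℂ) (deltaMatrix r θ).charpoly = 0 := by
      have hx : (r : ℝ) * ang r t θ = θ + 2 * Real.pi * (c t) := by
        rw [ang]
        field_simp
      exact deltaMatrix_root r hr θ (ang r t θ) (c t) hx
    rw [hcp θ, Polynomial.eval_prod] at hroot
    obtain ⟨i, _, hi⟩ := Finset.prod_eq_zero_iff.mp hroot
    simp only [Polynomial.eval_sub, Polynomial.eval_X, Polynomial.eval_C, sub_eq_zero] at hi
    exact ⟨i, by exact_mod_cast hi.symm⟩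
  choose σ hσ using hex
  have hinj : Function.Injective σ := by
    intro j j' hjj
    have h1 : g r j θ = lam (σ j) θ := (hσ j).symm
    rw [hjj, hσ j'] at h1
    exact (g_strictMono hr hθ hθπ).injective h1
  exact sorted_match (fun j => lam j θ) (fun j => g r j θ) (hsorted θ)
    (g_strictMono hr hθ hθπ) σ hinj hσ

lemma g_hasDerivAt (r : ℕ) (j : Fin r) (θ : ℝ) :
    HasDerivAt (g r j)
      (2 * (-Real.sin (ang r (r - 1 - (j : ℕ)) θ) * (1 / r))) θ := by
  set t := r - 1 - (j : ℕ)
  set K : ℝ := 2 * Real.pi * (c t) with hK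
  have hfun : g r j = fun θ : ℝ => 2 * Real.cos ((θ + K) / r) := by
    funext x
    rw [g, ang]
  rw [hfun]
  have hu : HasDerivAt (fun θ : ℝ => (θ + K) / r) (1 / r) θ := by
    simpa using ((hasDerivAt_id θ).add_const K).div_const (r : ℝ)
  have hcos := (Real.hasDerivAt_cos ((θ + K) / r)).comp θ hu
  have : ang r t θ = (θ + K) / r := by rw [ang]
  rw [this]
  exact hcos.const_mul 2

lemma sign_key {r : ℕ} (hr : 1 ≤ r) {θ : ℝ} (hθ : 0 < θ) (hθπ : θ < Real.pi)
    {t : ℕ} (ht : t < r) :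
    (0 : ℝ) < (-1 : ℝ) ^ t * Real.sin (ang r t θ) := by
  have hs : 0 < Real.sin (psiF r t θ) :=
    Real.sin_pos_of_pos_of_lt_pi (psiF_pos (by omega) hθ hθπ) (psiF_lt_pi ht hθ hθπ)
  rcases Nat.even_or_odd t with he | ho
  · rw [ang_eq, if_pos he, he.neg_one_pow, one_mul]
    exact hs
  · rw [ang_eq, if_neg (Nat.not_even_iff_odd.mpr ho), ho.neg_one_pow, Real.sin_neg]
    nlinarith

end DM

open Polynomial in
/-- if λ_1(θ) ≤ ⋯ ≤ λ_r(θ) denote the eigenvalues of Δ_θ^r (counted with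
multiplicity, encoded by the characteristic polynomial factoring as ∏ (X − λ_j(θ))),
then each λ_j is differentiable on (0,π) with (−1)^{r−j} λ_j′(θ) < 0 there; in
particular λ_j is strictly decreasing on (0,π) when r−j is even, and strictly
increasing when r−j is odd (here j runs from 1 to r, encoded as j.val + 1). -/
theorem deltaMatrix_eigenvalue_deriv_sign (r : ℕ) (hr : 1 ≤ r)
    (lam : Fin r → ℝ → ℝ)
    (hsorted : ∀ θ : ℝ, Monotone fun j => lam j θ)
    (hcp : ∀ θ : ℝ, (deltaMatrix r θ).charpoly =
      ∏ j : Fin r, (X - C ((lam j θ : ℝ) : ℂ))) :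
    ∀ j : Fin r,
      (∀ θ ∈ Set.Ioo 0 Real.pi,
        DifferentiableAt ℝ (lam j) θ ∧
          (-1 : ℝ) ^ (r - 1 - (j : ℕ)) * deriv (lam j) θ < 0) ∧
      (Even (r - 1 - (j : ℕ)) → StrictAntiOn (lam j) (Set.Ioo 0 Real.pi)) ∧
      (Odd (r - 1 - (j : ℕ)) → StrictMonoOn (lam j) (Set.Ioo 0 Real.pi)) := by
  intro j
  have hj := j.isLt
  set t := r - 1 - (j : ℕ) with htdef
  have htr : t < r := by omega
  have hlamg : ∀ θ ∈ Set.Ioo (0 : ℝ) Real.pi, lam j θ = DM.g r j θ := fun θ hθ =>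
    DM.lam_eq_g r hr lam hsorted hcp hθ.1 hθ.2 j
  refine ⟨?_, ?_, ?_⟩
  · intro θ hθ
    have hev : lam j =ᶠ[nhds θ] DM.g r j :=
      Filter.eventuallyEq_of_mem (isOpen_Ioo.mem_nhds hθ) hlamg
    have hd : HasDerivAt (lam j)
        (2 * (-Real.sin (DM.ang r t θ) * (1 / r))) θ :=
      (DM.g_hasDerivAt r j θ).congr_of_eventuallyEq hev
    refine ⟨hd.differentiableAt, ?_⟩
    rw [hd.deriv]
    have hsin := DM.sign_key hr hθ.1 hθ.2 htr
    have hrpos : (0 : ℝ) < (r : ℝ) := by exact_mod_cast hr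
    have h1 : (0:ℝ) < ((-1 : ℝ) ^ t * Real.sin (DM.ang r t θ)) * (1 / r) :=
      mul_pos hsin (by positivity)
    nlinarith [h1]
  · intro hEven a ha b hb hab
    rw [hlamg a ha, hlamg b hb, DM.g_eq_psi, DM.g_eq_psi]
    have hpab : DM.psiF r t a < DM.psiF r t b := by
      rw [DM.psiF, DM.psiF, div_lt_div_iff_of_pos_right (by exact_mod_cast hr : (0:ℝ) < r)]
      unfold DM.psiNum
      rw [if_pos hEven, if_pos hEven]
      linarith
    have h1 : 0 ≤ DM.psiF r t a := (DM.psiF_pos (by omega) ha.1 ha.2).le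
    have h2 : DM.psiF r t b ≤ Real.pi := (DM.psiF_lt_pi htr hb.1 hb.2).le
    have := Real.cos_lt_cos_of_nonneg_of_le_pi h1 h2 hpab
    linarith
  · intro hOdd a ha b hb hab
    rw [hlamg a ha, hlamg b hb, DM.g_eq_psi, DM.g_eq_psi]
    have hpab : DM.psiF r t b < DM.psiF r t a := by
      rw [DM.psiF, DM.psiF, div_lt_div_iff_of_pos_right (by exact_mod_cast hr : (0:ℝ) < r)]
      unfold DM.psiNum
      rw [if_neg (Nat.not_even_iff_odd.mpr hOdd), if_neg (Nat.not_even_iff_odd.mpr hOdd)]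
      linarith
    have h1 : 0 ≤ DM.psiF r t b := (DM.psiF_pos (by omega) hb.1 hb.2).le
    have h2 : DM.psiF r t a ≤ Real.pi := (DM.psiF_lt_pi htr ha.1 ha.2).le
    have := Real.cos_lt_cos_of_nonneg_of_le_pi h1 h2 hpab
    linarith
end

section
/- Fix an integer r ≥ 1 and θ ∈ ℝ. If λ ∈ ℝ is an eigenvalue of the r×r Hermitian matrix Δ_θ^r, then tr(T_λ^r) = 2cos θ, where T_λ = [[λ, −1], [1, 0]] is the 2×2 transfer matrix and T_λ^r its r-th matrix power. -/
/-!
Extend an eigenvector `v` of `Δ_θ^r` for `λ` to a sequence `u` on `ℤ` by `u (n + r) = e^{iθ} u n`.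
The corner entries of `Δ_θ^r` are exactly the wrap-around terms, so `u (n - 1) + u (n + 1) = λ u n`
for every `n`, i.e. `T_λ` maps `(u n, u (n - 1))` to `(u (n + 1), u n)`. Hence `T_λ^r` has the
eigenvalue `e^{iθ}` on `(u 1, u 0) ≠ 0`; as `det T_λ^r = 1`, its other eigenvalue is `e^{-iθ}`
and its trace is `2 cos θ`.
-/

open Matrix

theorem Matrix.exists_mulVec_eq_smul_of_mem_spectrum {K n : Type*} [Field K] [Fintype n]
    [DecidableEq n] {A : Matrix n n K} {μ : K} (h : μ ∈ spectrum K A) :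
    ∃ v ≠ 0, A *ᵥ v = μ • v := by
  rw [← spectrum_toLin', ← Module.End.hasEigenvalue_iff_mem_spectrum] at h
  obtain ⟨v, hv⟩ := h.exists_hasEigenvector
  exact ⟨v, hv.2, by rw [← toLin'_apply, ← Module.End.mem_eigenspace_iff]; exact hv.1⟩

theorem Matrix.trace_eq_add_inv_of_det_eq_one {K : Type*} [Field K]
    {M : Matrix (Fin 2) (Fin 2) K} (hM : M.det = 1) {c : K} {w : Fin 2 → K} (hw : w ≠ 0)
    (h : M *ᵥ w = c • w) : M.trace = c + c⁻¹ := by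
  have hsing : (M - c • 1).det = 0 :=
    exists_mulVec_eq_zero_iff.mp ⟨w, hw, by rw [sub_mulVec, h, smul_mulVec, one_mulVec, sub_self]⟩
  have hchar : c ^ 2 - M.trace * c + 1 = 0 := by
    rw [det_fin_two] at hM hsing
    rw [trace_fin_two]
    simp only [sub_apply, smul_apply, one_apply_eq, one_apply_ne, smul_eq_mul, mul_one, mul_zero,
      sub_zero, ne_eq, zero_ne_one, one_ne_zero, not_false_eq_true] at hsing
    linear_combination hsing - hM
  have hc : c ≠ 0 := by rintro rfl; simp at hchar
  field_simp
  linear_combination -hchar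

section Transfer

variable {R : Type*} [CommRing R] {t : R} {u : ℤ → R}

theorem transfer_pow_mulVec (hu : ∀ n, u n + u (n + 2) = t * u (n + 1)) (m : ℕ) :
    (!![t, -1; 1, 0] ^ m) *ᵥ ![u 1, u 0] = ![u (m + 1), u m] := by
  induction m with
  | zero => simp
  | succ m ih =>
    rw [pow_succ', ← mulVec_mulVec, ih]
    ext i
    fin_cases i
    · have h := hu m
      rw [show (m : ℤ) + 2 = m + 1 + 1 by ring] at h
      simp only [Fin.zero_eta, mulVec_cons, mulVec_empty, add_zero, Pi.add_apply, Pi.smul_apply,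
        Function.comp_apply, cons_val_zero, head_cons, smul_eq_mul, tail_cons, mul_neg, mul_one,
        Nat.cast_add, Nat.cast_one]
      linear_combination -h
    · simp

theorem eq_zero_of_recurrence (hu : ∀ n, u n + u (n + 2) = t * u (n + 1)) (h0 : u 0 = 0)
    (h1 : u 1 = 0) (m : ℕ) : u m = 0 := by
  simpa [h0, h1, eq_comm] using congrFun (transfer_pow_mulVec hu m) 1

end Transfer

open scoped Fin.CommRing

noncomputable def twistedExtension {K : Type*} [Field K] {r : ℕ} [NeZero r] (c : K)
    (v : Fin r → K) (n : ℤ) : K :=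
  c ^ (n / r) * v n

section TwistedExtension

variable {K : Type*} [Field K] {c : K}

section

variable {r : ℕ} [NeZero r] {v : Fin r → K}

theorem twistedExtension_add_mul (hc : c ≠ 0) (n q : ℤ) :
    twistedExtension c v (n + r * q) = c ^ q * twistedExtension c v n := by
  have hr : (r : ℤ) ≠ 0 := by exact_mod_cast NeZero.ne r
  simp only [twistedExtension, Int.add_mul_ediv_left _ _ hr, zpow_add₀ hc, Int.cast_add,
    Int.cast_mul, Int.cast_natCast, Fin.natCast_self, zero_mul, add_zero]
  ring

theorem twistedExtension_val (j : Fin r) : twistedExtension c v j = v j := by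
  simp [twistedExtension, Int.ediv_eq_zero_of_lt]

theorem ne_zero_of_twistedExtension_recurrence {t : K} (hv : v ≠ 0)
    (hu : ∀ n, twistedExtension c v n + twistedExtension c v (n + 2) =
      t * twistedExtension c v (n + 1)) :
    ![twistedExtension c v 1, twistedExtension c v 0] ≠ 0 := by
  intro h
  refine hv (funext fun j => ?_)
  rw [← twistedExtension_val (c := c) (v := v) j]
  exact eq_zero_of_recurrence hu (by simpa using congrFun h 1) (by simpa using congrFun h 0) j

theorem transfer_pow_mulVec_twistedExtension {t : K} (hc : c ≠ 0)
    (hu : ∀ n, twistedExtension c v n + twistedExtension c v (n + 2) =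
      t * twistedExtension c v (n + 1)) :
    (!![t, -1; 1, 0] ^ r) *ᵥ ![twistedExtension c v 1, twistedExtension c v 0] =
      c • ![twistedExtension c v 1, twistedExtension c v 0] := by
  have hper (m : ℤ) : twistedExtension c v (r + m) = c * twistedExtension c v m := by
    simpa [add_comm] using twistedExtension_add_mul (v := v) hc m 1
  have hper₀ : twistedExtension c v r = c * twistedExtension c v 0 := by simpa using hper 0
  rw [transfer_pow_mulVec hu, hper 1, hper₀]
  ext i
  fin_cases i <;> simp

end

variable {n : ℕ} {v : Fin (n + 1) → K}

theorem twistedExtension_sub_one (hc : c ≠ 0) (j : Fin (n + 1)) :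
    twistedExtension c v ((j : ℤ) - 1) = (if j = 0 then c⁻¹ else 1) * v (j - 1) := by
  split_ifs with hj
  · subst hj
    have hlast : (0 : Fin (n + 1)) - 1 = Fin.last n := Fin.ext (by simp)
    have h := twistedExtension_add_mul (v := v) hc (Fin.last n : ℕ) (-1)
    rw [twistedExtension_val, _root_.zpow_neg_one, Fin.val_last] at h
    rw [hlast, ← h]
    congr 1
    push_cast [Fin.val_zero]
    ring
  · have h : (j : ℤ) - 1 = ((j - 1 : Fin (n + 1)) : ℕ) := by
      rw [Fin.coe_sub_one, if_neg hj]
      have : (j : ℕ) ≠ 0 := Fin.val_ne_iff.mpr hj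
      omega
    rw [h, twistedExtension_val, one_mul]

theorem twistedExtension_add_one (hc : c ≠ 0) (j : Fin (n + 1)) :
    twistedExtension c v ((j : ℤ) + 1) = (if j = Fin.last n then c else 1) * v (j + 1) := by
  split_ifs with hj
  · subst hj
    have h0 : twistedExtension c v 0 = v 0 := by
      simpa using twistedExtension_val (c := c) (v := v) 0
    rw [Fin.val_last, Fin.last_add_one, ← h0]
    simpa using twistedExtension_add_mul (v := v) hc 0 1
  · have h : (j : ℤ) + 1 = ((j + 1 : Fin (n + 1)) : ℕ) := by
      rw [Fin.val_add_one_of_lt (Fin.lt_last_iff_ne_last.mpr hj)]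
      push_cast
      rfl
    rw [h, twistedExtension_val, one_mul]

end TwistedExtension

section Delta

variable {n : ℕ} {θ : ℝ}

theorem deltaMatrix_succ_apply (j k : Fin (n + 1)) :
    deltaMatrix (n + 1) θ j k =
      (if k = j - 1 then (if j = 0 then (Complex.exp (Complex.I * θ))⁻¹ else 1) else 0) +
        (if k = j + 1 then (if j = Fin.last n then Complex.exp (Complex.I * θ) else 1) else 0) := by
  have hsub : k = j - 1 ↔ (k : ℕ) = if (j : ℕ) = 0 then n else j - 1 := by
    rw [Fin.ext_iff, Fin.coe_sub_one]
    simp only [Fin.ext_iff, Fin.val_zero]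
  have hadd : k = j + 1 ↔ (k : ℕ) = if (j : ℕ) = n then 0 else (j : ℕ) + 1 := by
    rw [Fin.ext_iff, Fin.val_add_one]
    simp only [Fin.ext_iff, Fin.val_last]
  simp only [deltaMatrix, of_apply, Complex.exp_neg, hsub, hadd, Fin.ext_iff (b := 0),
    Fin.ext_iff (b := Fin.last n), Fin.val_zero, Fin.val_last]
  split_ifs <;> first | omega | ring

theorem deltaMatrix_succ_mulVec (v : Fin (n + 1) → ℂ) (j : Fin (n + 1)) :
    (deltaMatrix (n + 1) θ *ᵥ v) j =
      twistedExtension (Complex.exp (Complex.I * θ)) v ((j : ℤ) - 1) +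
        twistedExtension (Complex.exp (Complex.I * θ)) v ((j : ℤ) + 1) := by
  rw [twistedExtension_sub_one (Complex.exp_ne_zero _),
    twistedExtension_add_one (Complex.exp_ne_zero _)]
  simp only [mulVec, dotProduct, deltaMatrix_succ_apply, add_mul, ite_mul, zero_mul,
    Finset.sum_add_distrib, Finset.sum_ite_eq', Finset.mem_univ, if_true]

theorem twistedExtension_recurrence {t : ℂ} {v : Fin (n + 1) → ℂ}
    (hv : deltaMatrix (n + 1) θ *ᵥ v = t • v) (m : ℤ) :
    twistedExtension (Complex.exp (Complex.I * θ)) v m +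
        twistedExtension (Complex.exp (Complex.I * θ)) v (m + 2) =
      t * twistedExtension (Complex.exp (Complex.I * θ)) v (m + 1) := by
  set c := Complex.exp (Complex.I * θ)
  have hc : c ≠ 0 := Complex.exp_ne_zero _
  set j : Fin (n + 1) := ((m + 1 : ℤ) : Fin (n + 1))
  set q := (m + 1) / (n + 1 : ℕ)
  have hj : (m + 1 : ℤ) = (j : ℕ) + (n + 1 : ℕ) * q := by
    rw [Fin.val_intCast, Int.toNat_of_nonneg (Int.emod_nonneg _ (by omega)),
      Int.emod_add_mul_ediv]
  have hrow := congrFun hv j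
  rw [deltaMatrix_succ_mulVec, Pi.smul_apply, smul_eq_mul,
    ← twistedExtension_val (c := c) (v := v) j] at hrow
  have h0 : m = ((j : ℕ) - 1 : ℤ) + (n + 1 : ℕ) * q := by omega
  have h2 : m + 2 = ((j : ℕ) + 1 : ℤ) + (n + 1 : ℕ) * q := by omega
  rw [h2, hj, h0, twistedExtension_add_mul hc, twistedExtension_add_mul hc,
    twistedExtension_add_mul hc]
  linear_combination c ^ q * hrow

end Delta

/-- if λ ∈ ℝ is an eigenvalue of Δ_θ^r, then tr(T_λ^r) = 2cos θ, where
T_λ = [[λ, −1], [1, 0]]. -/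
theorem trace_transfer_pow_of_eigenvalue (r : ℕ) (hr : 1 ≤ r) (θ t : ℝ)
    (ht : (t : ℂ) ∈ spectrum ℂ (deltaMatrix r θ)) :
    Matrix.trace ((!![t, -1; 1, 0] : Matrix (Fin 2) (Fin 2) ℝ) ^ r) =
      2 * Real.cos θ := by
  obtain ⟨n, rfl⟩ : ∃ n, r = n + 1 := ⟨r - 1, by omega⟩
  obtain ⟨v, hv0, hv⟩ := exists_mulVec_eq_smul_of_mem_spectrum ht
  have hrec := twistedExtension_recurrence hv
  have htr := trace_eq_add_inv_of_det_eq_one (by simp [det_pow])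
    (ne_zero_of_twistedExtension_recurrence hv0 hrec)
    (transfer_pow_mulVec_twistedExtension (Complex.exp_ne_zero _) hrec)
  have hmap : (!![t, -1; 1, 0] ^ (n + 1) : Matrix (Fin 2) (Fin 2) ℝ).map Complex.ofRealHom =
      !![(t : ℂ), -1; 1, 0] ^ (n + 1) := by
    rw [← RingHom.mapMatrix_apply, map_pow]
    congr 1
    ext i j
    fin_cases i <;> fin_cases j <;> simp
  apply Complex.ofReal_injective
  rw [← Complex.ofRealHom_eq_coe, AddMonoidHom.map_trace, hmap, htr]
  push_cast
  rw [Complex.two_cos, ← Complex.exp_neg, neg_mul, mul_comm (θ : ℂ)]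
end

section
/- Let r be an even positive integer and Γ = {0,…,r−1}×{0,…,r−1}, and let Δ_{θ,φ}^Γ denote the Floquet matrix of the free Laplacian (zero potential) with phases (θ,φ). Then: (a) 4 and −4 are simple eigenvalues of Δ_{0,0}^Γ; (b) 0 is an eigenvalue of Δ_{0,0}^Γ whose multiplicity is congruent to 2 modulo 4; (c) every eigenvalue of Δ_{0,0}^Γ other than 4, −4, and 0 has multiplicity divisible by 4; (d) every eigenvalue of Δ_{π,π}^Γ has multiplicity divisible by 4. -/
/-!
The Floquet matrix `Δ_{θ,φ}` of the free Laplacian is diagonalised by the pairwise orthogonal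
Bloch waves `(n, m) ↦ e^{i(αⱼ n + βₖ m)}`, `αⱼ = (θ + 2πj)/p`, `βₖ = (φ + 2πk)/q`, with eigenvalues
`2 cos αⱼ + 2 cos βₖ`; so the multiplicity of μ is the number of indices `(j, k)` with
`2 cos αⱼ + 2 cos βₖ = μ`. For `p = q = r` and `θ = φ ∈ {0, π}` a reflection `σ` of the index
(`j ↦ -j` for θ = 0, `j ↦ r - 1 - j` for θ = π) preserves `cos αⱼ`, so the quarter turn
`(j, k) ↦ (k, σ j)` preserves the eigenvalue. Its orbits have 4 elements, except those of the fixed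
points of its square, `σ j = j` and `σ k = k`: for even `r` there are none when θ = π, and for
θ = 0 they are the points of `{0, r/2}²`, with eigenvalues `4, 0, 0, -4`. Finally
`2 cos αⱼ + 2 cos αₖ = ±4` forces `cos αⱼ = cos αₖ = ±1`, i.e. `j = k = 0`, resp. `j = k = r/2`.
-/

/-- The Floquet extension: given phases θ, φ and ψ : ℂ^Γ (Γ = {0,…,p−1}×{0,…,q−1},
identified with Fin p × Fin q), `floquetExt p q θ φ ψ` is the unique function
ψ̃ : ℤ² → ℂ extending ψ and satisfying ψ̃_{n+p,m} = e^{iθ} ψ̃_{n,m} and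
ψ̃_{n,m+q} = e^{iφ} ψ̃_{n,m} for all n, m ∈ ℤ. -/
noncomputable def floquetExt (p q : ℕ) [NeZero p] [NeZero q] (θ φ : ℝ)
    (ψ : Fin p × Fin q → ℂ) (nm : ℤ × ℤ) : ℂ :=
  Complex.exp (Complex.I * ((θ : ℂ) * ((nm.1 / (p : ℤ) : ℤ) : ℂ) +
      (φ : ℂ) * ((nm.2 / (q : ℤ) : ℤ) : ℂ))) *
    ψ (⟨(nm.1 % (p : ℤ)).toNat % p, Nat.mod_lt _ (Nat.pos_of_ne_zero (NeZero.ne p))⟩,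
       ⟨(nm.2 % (q : ℤ)).toNat % q, Nat.mod_lt _ (Nat.pos_of_ne_zero (NeZero.ne q))⟩)

open Finset Function MulAction Module Module.End Real
open scoped Matrix

namespace Equiv.Perm

variable {α : Type*} [Fintype α]

theorem four_dvd_card_of_pow_four_eq_one (g : Perm α) (h4 : g ^ 4 = 1)
    (h2 : ∀ x, (g ^ 2) x ≠ x) : 4 ∣ Fintype.card α := by
  classical
  have hperiod : ∀ x, minimalPeriod g x = 4 := by
    intro x
    have hdvd : minimalPeriod g x ∣ 2 ^ 2 := by
      apply IsPeriodicPt.minimalPeriod_dvd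
      rw [IsPeriodicPt, IsFixedPt, iterate_eq_pow, show 2 ^ 2 = 4 from rfl, h4, one_apply]
    obtain ⟨k, hk, hkx⟩ := (Nat.dvd_prime_pow Nat.prime_two).1 hdvd
    have hnot : ¬ minimalPeriod g x ∣ 2 := fun h => h2 x <| by
      rw [← iterate_eq_pow]; exact (isPeriodicPt_minimalPeriod g x).trans_dvd h
    interval_cases k <;> simp_all
  let G := Subgroup.zpowers g
  calc 4 ∣ ∑ ω : orbitRel.Quotient G α, Fintype.card (orbit G ω.out) :=
        dvd_sum fun ω _ => by rw [← minimalPeriod_eq_card]; exact (hperiod _).symm.dvd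
    _ = Fintype.card α := by
        rw [← Fintype.card_sigma]; exact Fintype.card_congr (selfEquivSigmaOrbits G α).symm

theorem card_filter_modEq_card_filter_sq_apply_eq [DecidableEq α] (g : Perm α) (h4 : g ^ 4 = 1)
    (p : α → Prop) [DecidablePred p] (hp : ∀ x, p (g x) ↔ p x) :
    #{x | p x} ≡ #{x | p x ∧ (g ^ 2) x = x} [MOD 4] := by
  have hg : ∀ x, (g ^ 2) (g x) = g x ↔ (g ^ 2) x = x := fun x => by
    rw [← mul_apply, ← pow_succ, pow_succ', mul_apply, apply_eq_iff_eq]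
  have hfree : 4 ∣ #{x | p x ∧ ¬(g ^ 2) x = x} := by
    rw [← Fintype.card_subtype]
    refine four_dvd_card_of_pow_four_eq_one (g.subtypePerm fun x => by rw [hp, hg]) ?_ ?_
    · ext x
      simp [subtypePerm_pow, h4]
    · intro x hx
      exact x.2.2 (by simpa [subtypePerm_pow, Subtype.ext_iff] using hx)
  have hsplit := card_filter_add_card_filter_not (s := univ.filter p) (fun x => (g ^ 2) x = x)
  rw [filter_filter, filter_filter] at hsplit
  rw [← hsplit]
  exact (Nat.modEq_zero_iff_dvd.2 hfree).add_left _

end Equiv.Perm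

def quarterTurn {β : Type*} (σ : Equiv.Perm β) : Equiv.Perm (β × β) :=
  (Equiv.prodComm β β).trans (Equiv.prodCongr (Equiv.refl β) σ)

section QuarterTurn

variable {β : Type*} (σ : Equiv.Perm β)

lemma quarterTurn_apply (x : β × β) : quarterTurn σ x = (x.2, σ x.1) := rfl

lemma quarterTurn_sq_apply (x : β × β) : (quarterTurn σ ^ 2) x = (σ x.1, σ x.2) := rfl

lemma quarterTurn_pow_four {σ : Equiv.Perm β} (hσ : Involutive σ) : quarterTurn σ ^ 4 = 1 := by
  ext x
  · exact hσ x.1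
  · exact hσ x.2

end QuarterTurn

theorem Module.End.finrank_eigenspace_eq_card {ι K V : Type*} [Fintype ι] [DecidableEq ι]
    [Field K] [DecidableEq K] [AddCommGroup V] [Module K V] (f : End K V) (b : Basis ι K V)
    (d : ι → K) (hb : ∀ i, f (b i) = d i • b i) (μ : K) :
    finrank K (eigenspace f μ) = #{i | d i = μ} := by
  have : FiniteDimensional K V := b.finiteDimensional_of_finite
  have hmat : LinearMap.toMatrix b b (f - μ • 1) = Matrix.diagonal fun i => d i - μ := by
    ext i j
    simp [LinearMap.toMatrix_apply, hb, Matrix.diagonal_apply, Finsupp.single_apply, eq_comm]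
    split_ifs <;> simp_all
  have hrank : finrank K (LinearMap.range (f - μ • 1)) = #{i | ¬d i = μ} := by
    rw [← Matrix.toLin_toMatrix b b (f - μ • 1), ← Matrix.rank_eq_finrank_range_toLin, hmat,
      Matrix.rank_diagonal, Fintype.card_subtype]
    simp only [ne_eq, sub_eq_zero]
  have hsum := (f - μ • 1).finrank_range_add_finrank_ker
  have hsplit := card_filter_add_card_filter_not (s := univ) (fun i => d i = μ)
  rw [card_univ] at hsplit
  rw [hrank, ← eigenspace_def, finrank_eq_card_basis b] at hsum
  omega

theorem linearIndependent_of_star_dotProduct_eq_zero {ι n 𝕜 : Type*} [RCLike 𝕜] [Fintype n]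
    {v : ι → n → 𝕜} (hv : ∀ i, v i ≠ 0) (horth : Pairwise fun i j => star (v i) ⬝ᵥ v j = 0) :
    LinearIndependent 𝕜 v := by
  refine LinearIndependent.of_comp (WithLp.linearEquiv 2 𝕜 (n → 𝕜)).symm.toLinearMap
    (linearIndependent_of_ne_zero_of_inner_eq_zero (fun i => by simpa using hv i) fun i j hij => ?_)
  simpa [EuclideanSpace.inner_eq_star_dotProduct, dotProduct_comm] using horth hij

theorem eigMult_eq_card_of_linearIndependent {ι n : Type*} [Fintype ι] [DecidableEq ι]
    [Fintype n] [DecidableEq n]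
    (M : Matrix n n ℂ) {v : ι → n → ℂ} (d : ι → ℂ) (hv : LinearIndependent ℂ v)
    (hcard : Fintype.card ι = Fintype.card n) (heig : ∀ i, M *ᵥ v i = d i • v i) (μ : ℂ) :
    eigMult M μ = #{i | d i = μ} :=
  finrank_eigenspace_eq_card (Matrix.toLin' M) (basisOfLinearIndependentOfCardEqFinrank' v hv
    (by simpa using hcard)) d (by simpa [Matrix.toLin'_apply] using heig) μ

noncomputable section

def blochWave (α : ℝ) (n : ℤ) : ℂ := Complex.exp (α * n * Complex.I)

/-- Chosen so that `ψ = blochWave (floquetFreq p θ j)` satisfies `ψ (n + p) = e^{iθ} ψ n`. -/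
def floquetFreq (p : ℕ) (θ : ℝ) (j : ℕ) : ℝ := (θ + 2 * π * j) / p

lemma blochWave_add (α : ℝ) (m n : ℤ) : blochWave α (m + n) = blochWave α m * blochWave α n := by
  rw [blochWave, blochWave, blochWave, ← Complex.exp_add]
  push_cast
  ring_nf

lemma blochWave_sub_one_add_blochWave_add_one (α : ℝ) (n : ℤ) :
    blochWave α (n - 1) + blochWave α (n + 1) = (2 * cos α : ℝ) * blochWave α n := by
  simp only [blochWave, Complex.ofReal_mul, Complex.ofReal_ofNat, Complex.ofReal_cos,
    Complex.two_cos, add_mul, ← Complex.exp_add]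
  rw [add_comm]
  congr 1 <;> congr 1 <;> push_cast <;> ring

lemma star_blochWave_mul_blochWave (α β : ℝ) (n : ℤ) :
    star (blochWave α n) * blochWave β n = blochWave (β - α) n := by
  rw [blochWave, blochWave, blochWave, Complex.star_def, ← Complex.exp_conj, ← Complex.exp_add]
  congr 1
  simp only [map_mul, Complex.conj_ofReal, Complex.conj_I, map_intCast]
  push_cast
  ring

section FloquetFreq

variable {p : ℕ} [NeZero p] {θ : ℝ}

lemma blochWave_floquetFreq_mul (j : ℕ) (k : ℤ) :
    blochWave (floquetFreq p θ j) (p * k) = Complex.exp (Complex.I * (θ * k)) := by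
  have hp : (p : ℂ) ≠ 0 := Nat.cast_ne_zero.mpr (NeZero.ne p)
  rw [blochWave, floquetFreq, show (((θ + 2 * π * j) / p : ℝ) : ℂ) * ((p * k : ℤ) : ℂ) *
      Complex.I = Complex.I * (θ * k) + (j * k : ℤ) * (2 * π * Complex.I) by push_cast; field_simp,
    Complex.exp_add, Complex.exp_int_mul_two_pi_mul_I, mul_one]

lemma blochWave_floquetFreq (j : ℕ) (x : ℤ) :
    blochWave (floquetFreq p θ j) x =
      Complex.exp (Complex.I * (θ * (x / p : ℤ))) * blochWave (floquetFreq p θ j) (x % p) := by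
  conv_lhs => rw [← Int.mul_ediv_add_emod x p]
  rw [blochWave_add, blochWave_floquetFreq_mul]

lemma sum_star_blochWave_mul_blochWave {j k : Fin p} (hjk : j ≠ k) :
    ∑ n : Fin p, star (blochWave (floquetFreq p θ j) n) * blochWave (floquetFreq p θ k) n = 0 := by
  set ζ := Complex.exp (2 * π * Complex.I / p)
  have hζ : IsPrimitiveRoot ζ p := Complex.isPrimitiveRoot_exp p (NeZero.ne p)
  set z := ζ ^ ((k : ℤ) - j)
  have hz : z ≠ 1 := by
    rw [Ne, hζ.zpow_eq_one_iff_dvd]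
    intro h
    have := Int.eq_zero_of_abs_lt_dvd h (abs_lt.2 ⟨by omega, by omega⟩)
    exact hjk (Fin.ext (by omega))
  have hterm : ∀ n : ℕ,
      star (blochWave (floquetFreq p θ j) n) * blochWave (floquetFreq p θ k) n = z ^ n := by
    intro n
    rw [star_blochWave_mul_blochWave, ← zpow_natCast, ← zpow_mul, blochWave,
      ← Complex.exp_int_mul]
    congr 1
    have hp : (p : ℂ) ≠ 0 := Nat.cast_ne_zero.mpr (NeZero.ne p)
    simp only [floquetFreq]
    push_cast
    field_simp
    ring
  simp only [hterm]
  rw [Fin.sum_univ_eq_sum_range (fun n => z ^ n), geom_sum_eq hz, ← zpow_natCast, ← zpow_mul,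
    mul_comm, zpow_mul, zpow_natCast, hζ.pow_eq_one, one_zpow, sub_self, zero_div]

end FloquetFreq

lemma Int.natCast_toNat_emod_mod (z : ℤ) {m : ℕ} (hm : m ≠ 0) :
    (((z % m).toNat % m : ℕ) : ℤ) = z % m := by
  have h0 : 0 ≤ z % m := Int.emod_nonneg z (by omega)
  have h1 : z % m < m := Int.emod_lt_of_pos z (by omega)
  rw [Nat.mod_eq_of_lt (by omega), Int.toNat_of_nonneg h0]

section FloquetLaplacian

variable (p q : ℕ) [NeZero p] [NeZero q] (θ φ : ℝ)

/-- The vector `Δ_{θ,φ}^Γ ψ`. -/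
def floquetLaplacian (ψ : Fin p × Fin q → ℂ) (ab : Fin p × Fin q) : ℂ :=
  floquetExt p q θ φ ψ ((ab.1 : ℤ) - 1, (ab.2 : ℤ)) +
  floquetExt p q θ φ ψ ((ab.1 : ℤ) + 1, (ab.2 : ℤ)) +
  floquetExt p q θ φ ψ ((ab.1 : ℤ), (ab.2 : ℤ) - 1) +
  floquetExt p q θ φ ψ ((ab.1 : ℤ), (ab.2 : ℤ) + 1)

def floquetEigenvector (jk : Fin p × Fin q) (ab : Fin p × Fin q) : ℂ :=
  blochWave (floquetFreq p θ jk.1) (ab.1 : ℕ) * blochWave (floquetFreq q φ jk.2) (ab.2 : ℕ)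

def floquetEigenvalue (jk : Fin p × Fin q) : ℝ :=
  2 * cos (floquetFreq p θ jk.1) + 2 * cos (floquetFreq q φ jk.2)

lemma floquetExt_floquetEigenvector (jk : Fin p × Fin q) (x y : ℤ) :
    floquetExt p q θ φ (floquetEigenvector p q θ φ jk) (x, y) =
      blochWave (floquetFreq p θ jk.1) x * blochWave (floquetFreq q φ jk.2) y := by
  rw [floquetExt, floquetEigenvector]
  dsimp only
  rw [Int.natCast_toNat_emod_mod x (NeZero.ne p), Int.natCast_toNat_emod_mod y (NeZero.ne q),
    blochWave_floquetFreq _ x, blochWave_floquetFreq _ y, mul_add, Complex.exp_add]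
  ring

lemma floquetLaplacian_floquetEigenvector (jk : Fin p × Fin q) :
    floquetLaplacian p q θ φ (floquetEigenvector p q θ φ jk) =
      (floquetEigenvalue p q θ φ jk : ℂ) • floquetEigenvector p q θ φ jk := by
  funext ab
  simp only [floquetLaplacian, floquetExt_floquetEigenvector, Pi.smul_apply, smul_eq_mul,
    floquetEigenvalue, floquetEigenvector, Complex.ofReal_add]
  linear_combination
    blochWave (floquetFreq q φ jk.2) (ab.2 : ℕ) *
      blochWave_sub_one_add_blochWave_add_one (floquetFreq p θ jk.1) (ab.1 : ℕ) +
    blochWave (floquetFreq p θ jk.1) (ab.1 : ℕ) *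
      blochWave_sub_one_add_blochWave_add_one (floquetFreq q φ jk.2) (ab.2 : ℕ)

lemma floquetEigenvector_ne_zero (jk : Fin p × Fin q) : floquetEigenvector p q θ φ jk ≠ 0 := by
  intro h
  simpa [floquetEigenvector, blochWave] using congrFun h 0

lemma pairwise_star_floquetEigenvector_dotProduct_eq_zero :
    Pairwise fun i j =>
      star (floquetEigenvector p q θ φ i) ⬝ᵥ floquetEigenvector p q θ φ j = 0 := by
  intro i j hij
  rw [dotProduct, Fintype.sum_prod_type]
  simp only [floquetEigenvector, Pi.star_apply, star_mul', mul_mul_mul_comm, ← sum_mul_sum]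
  by_cases h1 : i.1 = j.1
  · rw [sum_star_blochWave_mul_blochWave fun h2 => hij (Prod.ext h1 h2), mul_zero]
  · rw [sum_star_blochWave_mul_blochWave h1, zero_mul]

theorem eigMult_eq_card_floquetEigenvalue {M : Matrix (Fin p × Fin q) (Fin p × Fin q) ℂ}
    (hM : ∀ ψ, M *ᵥ ψ = floquetLaplacian p q θ φ ψ) (μ : ℂ) :
    eigMult M μ = #{jk | (floquetEigenvalue p q θ φ jk : ℂ) = μ} :=
  eigMult_eq_card_of_linearIndependent M _
    (linearIndependent_of_star_dotProduct_eq_zero (floquetEigenvector_ne_zero p q θ φ)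
      (pairwise_star_floquetEigenvector_dotProduct_eq_zero p q θ φ))
    rfl (fun jk => by rw [hM, floquetLaplacian_floquetEigenvector]) μ

end FloquetLaplacian

end

theorem card_floquetEigenvalue_modEq {r : ℕ} {θ : ℝ} {σ : Equiv.Perm (Fin r)} (hσ : Involutive σ)
    (hcos : ∀ j, cos (floquetFreq r θ (σ j)) = cos (floquetFreq r θ j)) (μ : ℂ) :
    #{x | (floquetEigenvalue r r θ θ x : ℂ) = μ} ≡
      #{x | (floquetEigenvalue r r θ θ x : ℂ) = μ ∧ σ x.1 = x.1 ∧ σ x.2 = x.2} [MOD 4] := by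
  simpa only [quarterTurn_sq_apply, Prod.ext_iff] using
    (quarterTurn σ).card_filter_modEq_card_filter_sq_apply_eq (quarterTurn_pow_four hσ)
      (fun x => (floquetEigenvalue r r θ θ x : ℂ) = μ)
      fun x => by simp only [floquetEigenvalue, quarterTurn_apply, hcos, add_comm]

lemma Fin.rev_ne_self_of_even {r : ℕ} (hr : Even r) (j : Fin r) : j.rev ≠ j := by
  intro h
  have := congrArg Fin.val h
  rw [Fin.val_rev] at this
  obtain ⟨k, rfl⟩ := hr
  omega

section Spectrum

variable {r : ℕ} [NeZero r]

lemma cos_floquetFreq_neg (j : Fin r) :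
    cos (floquetFreq r 0 ↑(-j)) = cos (floquetFreq r 0 j) := by
  rcases eq_or_ne j 0 with rfl | hj
  · rw [neg_zero]
  have hr : (r : ℝ) ≠ 0 := Nat.cast_ne_zero.mpr (NeZero.ne r)
  have hval : ((-j : Fin r) : ℕ) = r - j := by
    rw [Fin.val_neg', Nat.mod_eq_of_lt (by have := Fin.pos_iff_ne_zero.2 hj; omega)]
  rw [hval, ← cos_two_pi_sub]
  congr 1
  simp only [floquetFreq]
  rw [Nat.cast_sub j.is_lt.le]
  field_simp
  ring

lemma cos_floquetFreq_rev (j : Fin r) :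
    cos (floquetFreq r π j.rev) = cos (floquetFreq r π j) := by
  have hr : (r : ℝ) ≠ 0 := Nat.cast_ne_zero.mpr (NeZero.ne r)
  rw [Fin.val_rev, ← cos_two_pi_sub]
  congr 1
  simp only [floquetFreq]
  rw [Nat.cast_sub j.is_lt]
  push_cast
  field_simp
  ring

lemma floquetFreq_zero_mem_Ico (j : Fin r) : floquetFreq r 0 j ∈ Set.Ico 0 (2 * π) := by
  have hr : (0 : ℝ) < r := Nat.cast_pos.mpr (NeZero.pos r)
  have hj : (j : ℝ) < r := by exact_mod_cast j.is_lt
  simp only [floquetFreq, zero_add, Set.mem_Ico]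
  constructor
  · positivity
  · rw [div_lt_iff₀ hr]; nlinarith [pi_pos]

lemma cos_floquetFreq_zero_eq_one_iff (j : Fin r) : cos (floquetFreq r 0 j) = 1 ↔ j = 0 := by
  obtain ⟨h0, h1⟩ := floquetFreq_zero_mem_Ico j
  rw [cos_eq_one_iff_of_lt_of_lt (by linarith) h1, Fin.ext_iff]
  simp [floquetFreq, pi_ne_zero, NeZero.ne r]

lemma cos_floquetFreq_zero_eq_neg_one_iff (j : Fin r) :
    cos (floquetFreq r 0 j) = -1 ↔ 2 * (j : ℕ) = r := by
  obtain ⟨h0, h1⟩ := floquetFreq_zero_mem_Ico j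
  have hr : (r : ℝ) ≠ 0 := Nat.cast_ne_zero.mpr (NeZero.ne r)
  rw [← neg_inj, ← cos_sub_pi, neg_neg, cos_eq_one_iff_of_lt_of_lt (by linarith [pi_pos])
    (by linarith), sub_eq_zero, floquetFreq, div_eq_iff hr, ← @Nat.cast_inj ℝ]
  push_cast
  constructor <;> intro h <;> nlinarith [pi_pos]

lemma Fin.neg_eq_self_iff (j : Fin r) : -j = j ↔ j = 0 ∨ 2 * (j : ℕ) = r := by
  rw [Fin.ext_iff, Fin.val_neg', Fin.ext_iff, Fin.val_zero]
  have := j.is_lt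
  rcases Nat.eq_zero_or_pos (j : ℕ) with h | h
  · simp [h]
  · rw [Nat.mod_eq_of_lt (by omega)]; omega

lemma two_mul_cos_floquetFreq_zero_of_neg_eq_self {j : Fin r} (hj : -j = j) :
    2 * cos (floquetFreq r 0 j) = if j = 0 then 2 else -2 := by
  split_ifs with h0
  · rw [(cos_floquetFreq_zero_eq_one_iff j).2 h0]; norm_num
  · rw [(cos_floquetFreq_zero_eq_neg_one_iff j).2
      (((Fin.neg_eq_self_iff j).1 hj).resolve_left h0)]; norm_num

lemma floquetEigenvalue_zero_eq_four_iff (x : Fin r × Fin r) :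
    (floquetEigenvalue r r 0 0 x : ℂ) = 4 ↔ x = (0, 0) := by
  have h1 := cos_le_one (floquetFreq r 0 x.1)
  have h2 := cos_le_one (floquetFreq r 0 x.2)
  rw [Prod.ext_iff, ← cos_floquetFreq_zero_eq_one_iff, ← cos_floquetFreq_zero_eq_one_iff,
    floquetEigenvalue]
  constructor
  · intro h
    have h' : 2 * cos (floquetFreq r 0 x.1) + 2 * cos (floquetFreq r 0 x.2) = 4 := by
      exact_mod_cast h
    constructor <;> linarith
  · rintro ⟨h1, h2⟩
    rw [h1, h2]
    norm_num

lemma floquetEigenvalue_zero_eq_neg_four_iff {c : Fin r} (hc : 2 * (c : ℕ) = r)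
    (x : Fin r × Fin r) : (floquetEigenvalue r r 0 0 x : ℂ) = -4 ↔ x = (c, c) := by
  have h1 := neg_one_le_cos (floquetFreq r 0 x.1)
  have h2 := neg_one_le_cos (floquetFreq r 0 x.2)
  have hcj : ∀ j : Fin r, j = c ↔ 2 * (j : ℕ) = r := fun j => by rw [Fin.ext_iff]; omega
  rw [Prod.ext_iff, hcj, hcj, ← cos_floquetFreq_zero_eq_neg_one_iff,
    ← cos_floquetFreq_zero_eq_neg_one_iff, floquetEigenvalue]
  constructor
  · intro h
    have h' : 2 * cos (floquetFreq r 0 x.1) + 2 * cos (floquetFreq r 0 x.2) = -4 := by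
      exact_mod_cast h
    constructor <;> linarith
  · rintro ⟨h1, h2⟩
    rw [h1, h2]
    norm_num

lemma floquetEigenvalue_zero_of_neg_eq_self {x : Fin r × Fin r} (h1 : -x.1 = x.1)
    (h2 : -x.2 = x.2) :
    floquetEigenvalue r r 0 0 x = (if x.1 = 0 then 2 else -2) + (if x.2 = 0 then 2 else -2) := by
  rw [floquetEigenvalue, two_mul_cos_floquetFreq_zero_of_neg_eq_self h1,
    two_mul_cos_floquetFreq_zero_of_neg_eq_self h2]

lemma card_filter_floquetEigenvalue_zero_eq_zero_neg_fixed {c : Fin r} (hc : 2 * (c : ℕ) = r) :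
    #{x : Fin r × Fin r | (floquetEigenvalue r r 0 0 x : ℂ) = 0 ∧ -x.1 = x.1 ∧ -x.2 = x.2} = 2 := by
  have hcj : ∀ j : Fin r, -j = j ↔ j = 0 ∨ j = c := fun j => by
    rw [Fin.neg_eq_self_iff, Fin.ext_iff (b := c)]; omega
  have hc0 : c ≠ 0 := fun h => NeZero.ne r (by rw [← hc, h, Fin.val_zero, mul_zero])
  suffices h : ({x | (floquetEigenvalue r r 0 0 x : ℂ) = 0 ∧ -x.1 = x.1 ∧ -x.2 = x.2} :
      Finset (Fin r × Fin r)) = {(0, c), (c, 0)} by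
    rw [h, card_pair (by simp [hc0.symm])]
  ext x
  simp only [mem_filter, mem_univ, true_and, mem_insert, mem_singleton]
  constructor
  · rintro ⟨hx, h1, h2⟩
    rw [floquetEigenvalue_zero_of_neg_eq_self h1 h2] at hx
    rcases (hcj _).1 h1 with h1 | h1 <;> rcases (hcj _).1 h2 with h2 | h2 <;>
      simp_all [Prod.ext_iff]
  · rintro (rfl | rfl) <;> refine ⟨?_, by simp [hcj], by simp [hcj]⟩ <;>
      rw [floquetEigenvalue_zero_of_neg_eq_self (by simp [hcj]) (by simp [hcj])] <;>
      simp [hc0]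

lemma filter_floquetEigenvalue_zero_neg_fixed_eq_empty {μ : ℂ} (h4 : μ ≠ 4) (hm4 : μ ≠ -4)
    (h0 : μ ≠ 0) :
    ({x | (floquetEigenvalue r r 0 0 x : ℂ) = μ ∧ -x.1 = x.1 ∧ -x.2 = x.2} :
      Finset (Fin r × Fin r)) = ∅ := by
  refine filter_false_of_mem fun x _ ⟨hx, h1, h2⟩ => ?_
  rw [floquetEigenvalue_zero_of_neg_eq_self h1 h2] at hx
  split_ifs at hx <;> norm_num at hx <;> simp_all

end Spectrum

/-- for even r and Γ = {0,…,r−1}², the free Floquet matrix Δ_{0,0}^Γ has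
±4 as simple eigenvalues, 0 as an eigenvalue of multiplicity ≡ 2 (mod 4), and all its
other eigenvalues have multiplicity divisible by 4; all eigenvalues of Δ_{π,π}^Γ have
multiplicity divisible by 4. -/
theorem floquet_free_laplacian_multiplicities
    (r : ℕ) [NeZero r] (hr : Even r)
    (M00 Mpp : Matrix (Fin r × Fin r) (Fin r × Fin r) ℂ)
    (hM00 : ∀ (ψ : Fin r × Fin r → ℂ) (ab : Fin r × Fin r),
      M00.mulVec ψ ab =
        floquetExt r r 0 0 ψ ((ab.1 : ℤ) - 1, (ab.2 : ℤ)) +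
        floquetExt r r 0 0 ψ ((ab.1 : ℤ) + 1, (ab.2 : ℤ)) +
        floquetExt r r 0 0 ψ ((ab.1 : ℤ), (ab.2 : ℤ) - 1) +
        floquetExt r r 0 0 ψ ((ab.1 : ℤ), (ab.2 : ℤ) + 1))
    (hMpp : ∀ (ψ : Fin r × Fin r → ℂ) (ab : Fin r × Fin r),
      Mpp.mulVec ψ ab =
        floquetExt r r Real.pi Real.pi ψ ((ab.1 : ℤ) - 1, (ab.2 : ℤ)) +
        floquetExt r r Real.pi Real.pi ψ ((ab.1 : ℤ) + 1, (ab.2 : ℤ)) +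
        floquetExt r r Real.pi Real.pi ψ ((ab.1 : ℤ), (ab.2 : ℤ) - 1) +
        floquetExt r r Real.pi Real.pi ψ ((ab.1 : ℤ), (ab.2 : ℤ) + 1)) :
    eigMult M00 4 = 1 ∧ eigMult M00 (-4) = 1 ∧
    eigMult M00 0 % 4 = 2 ∧
    (∀ μ : ℂ, μ ≠ 4 → μ ≠ -4 → μ ≠ 0 → 4 ∣ eigMult M00 μ) ∧
    (∀ μ : ℂ, 4 ∣ eigMult Mpp μ) := by
  have h00 := eigMult_eq_card_floquetEigenvalue r r 0 0 fun ψ => funext (hM00 ψ)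
  have hpp := eigMult_eq_card_floquetEigenvalue r r π π fun ψ => funext (hMpp ψ)
  obtain ⟨c, hc⟩ : ∃ c : Fin r, 2 * (c : ℕ) = r := by
    obtain ⟨h, rfl⟩ := hr
    exact ⟨⟨h, by have := NeZero.ne (h + h); omega⟩, two_mul h⟩
  have hneg := card_floquetEigenvalue_modEq (σ := Equiv.neg (Fin r)) neg_neg cos_floquetFreq_neg
  simp only [Equiv.neg_apply] at hneg
  refine ⟨?_, ?_, ?_, ?_, ?_⟩
  · simp only [h00, floquetEigenvalue_zero_eq_four_iff, filter_eq', mem_univ, if_true,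
      card_singleton]
  · simp only [h00, floquetEigenvalue_zero_eq_neg_four_iff hc, filter_eq', mem_univ, if_true,
      card_singleton]
  · rw [h00, hneg, card_filter_floquetEigenvalue_zero_eq_zero_neg_fixed hc]
  · intro μ h4 hm4 h0
    have := hneg μ
    rw [filter_floquetEigenvalue_zero_neg_fixed_eq_empty h4 hm4 h0, card_empty] at this
    rw [h00]
    exact Nat.modEq_zero_iff_dvd.1 this
  · intro μ
    have := card_floquetEigenvalue_modEq (r := r) (σ := Fin.revPerm) Fin.rev_rev
      cos_floquetFreq_rev μ
    simp only [Fin.revPerm_apply, Fin.rev_ne_self_of_even hr, and_false, filter_false,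
      card_empty] at this
    rw [hpp]
    exact Nat.modEq_zero_iff_dvd.1 this
end
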